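/- Let Ĝ ∈ 𝕆^{n×k} and let D be a real n×k matrix with rank(DᵀĜ) = k. Then among all matrices of the form Ĝ Q with Q ∈ 𝕆^{k×k}, there is exactly one matrix G such that GᵀD is symmetric positive semidefinite; i.e., there exists a unique Q ∈ 𝕆^{k×k} such that (ĜQ)ᵀD = Dᵀ(ĜQ) and (ĜQ)ᵀD is positive semidefinite. -/

import Mathlib

/-!
Writing `A = Ĝᵀ D`, we have `(ĜQ)ᵀ D = Qᵀ A`, and `A` is invertible because its transpose `DᵀĜ`
has full rank. For orthogonal `Q`, `(QᵀA)ᵀ(QᵀA) = AᵀA`, so `QᵀA` is positive semidefinite exactly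
when it is the square root `√(AᵀA)`; since `A` is invertible this pins down `Q = A (√(AᵀA))⁻¹`,
the orthogonal factor of the polar decomposition of `A`.
-/

open Matrix
open scoped MatrixOrder

namespace Matrix

theorem isUnit_det_of_rank_eq_card {ι K : Type*} [Fintype ι] [DecidableEq ι] [Field K]
    {A : Matrix ι ι K} (h : A.rank = Fintype.card ι) : IsUnit A.det := by
  have hrange : LinearMap.range A.mulVecLin = ⊤ :=
    Submodule.eq_top_of_finrank_eq (by simpa [Matrix.rank] using h)
  rw [← isUnit_iff_isUnit_det, ← isUnit_toLin'_iff]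
  exact (LinearMap.isUnit_iff_range_eq_top _).mpr hrange

variable {ι : Type*}

theorem PosSemidef.transpose_eq {S : Matrix ι ι ℝ} (hS : S.PosSemidef) : Sᵀ = S := by
  simpa [conjTranspose_eq_transpose_of_trivial] using hS.isHermitian.eq

variable [Fintype ι]

theorem posSemidef_transpose_mul_self (A : Matrix ι ι ℝ) : (Aᵀ * A).PosSemidef := by
  simpa [conjTranspose_eq_transpose_of_trivial] using posSemidef_conjTranspose_mul_self A

variable [DecidableEq ι]

theorem posSemidef_sqrt_transpose_mul_self (A : Matrix ι ι ℝ) :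
    (CFC.sqrt (Aᵀ * A)).PosSemidef :=
  nonneg_iff_posSemidef.mp (CFC.sqrt_nonneg _)

theorem sqrt_transpose_mul_self_mul_self (A : Matrix ι ι ℝ) :
    CFC.sqrt (Aᵀ * A) * CFC.sqrt (Aᵀ * A) = Aᵀ * A :=
  CFC.sqrt_mul_sqrt_self _ (posSemidef_transpose_mul_self A).nonneg

theorem isUnit_det_sqrt_transpose_mul_self {A : Matrix ι ι ℝ} (hA : IsUnit A.det) :
    IsUnit (CFC.sqrt (Aᵀ * A)).det := by
  have hsq := congrArg det (sqrt_transpose_mul_self_mul_self A)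
  rw [det_mul, det_mul, det_transpose] at hsq
  exact isUnit_of_mul_isUnit_left (hsq ▸ hA.mul hA)

/-- The orthogonal factor of the polar decomposition `A = polarFactor A * √(AᵀA)`. -/
noncomputable def polarFactor (A : Matrix ι ι ℝ) : Matrix ι ι ℝ :=
  A * (CFC.sqrt (Aᵀ * A))⁻¹

theorem transpose_polarFactor_mul_self {A : Matrix ι ι ℝ} (hA : IsUnit A.det) :
    (polarFactor A)ᵀ * A = CFC.sqrt (Aᵀ * A) := by
  have hST : (CFC.sqrt (Aᵀ * A))ᵀ = CFC.sqrt (Aᵀ * A) :=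
    (posSemidef_sqrt_transpose_mul_self A).transpose_eq
  set S := CFC.sqrt (Aᵀ * A)
  have hSS : S * S = Aᵀ * A := sqrt_transpose_mul_self_mul_self A
  have hS : IsUnit S.det := isUnit_det_sqrt_transpose_mul_self hA
  rw [polarFactor, transpose_mul, transpose_nonsing_inv, hST, Matrix.mul_assoc, ← hSS,
    ← Matrix.mul_assoc, nonsing_inv_mul _ hS, Matrix.one_mul]

theorem polarFactor_transpose_mul_self {A : Matrix ι ι ℝ} (hA : IsUnit A.det) :
    (polarFactor A)ᵀ * polarFactor A = 1 := by
  have hS : IsUnit (CFC.sqrt (Aᵀ * A)).det := isUnit_det_sqrt_transpose_mul_self hA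
  calc (polarFactor A)ᵀ * polarFactor A = (polarFactor A)ᵀ * A * (CFC.sqrt (Aᵀ * A))⁻¹ := by
        rw [Matrix.mul_assoc]; rfl
    _ = 1 := by rw [transpose_polarFactor_mul_self hA, mul_nonsing_inv _ hS]

theorem transpose_mul_eq_sqrt_of_posSemidef {A Q : Matrix ι ι ℝ} (hQ : Qᵀ * Q = 1)
    (hpsd : (Qᵀ * A).PosSemidef) : Qᵀ * A = CFC.sqrt (Aᵀ * A) := by
  refine (CFC.sqrt_unique ?_ hpsd.nonneg).symm
  calc Qᵀ * A * (Qᵀ * A) = (Qᵀ * A)ᵀ * (Qᵀ * A) := by rw [hpsd.transpose_eq]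
    _ = Aᵀ * (Q * Qᵀ) * A := by simp only [transpose_mul, transpose_transpose, Matrix.mul_assoc]
    _ = Aᵀ * A := by rw [mul_eq_one_comm.mp hQ, Matrix.mul_one]

theorem existsUnique_orthogonal_transpose_mul_posSemidef {A : Matrix ι ι ℝ}
    (hA : IsUnit A.det) : ∃! Q : Matrix ι ι ℝ, Qᵀ * Q = 1 ∧ (Qᵀ * A).PosSemidef := by
  refine ⟨polarFactor A, ⟨polarFactor_transpose_mul_self hA, ?_⟩, ?_⟩
  · rw [transpose_polarFactor_mul_self hA]
    exact posSemidef_sqrt_transpose_mul_self A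
  · rintro Q ⟨hQ, hpsd⟩
    have : Invertible A := A.invertibleOfIsUnitDet hA
    have hT : Qᵀ * A = (polarFactor A)ᵀ * A := by
      rw [transpose_mul_eq_sqrt_of_posSemidef hQ hpsd, transpose_polarFactor_mul_self hA]
    exact transpose_injective ((mul_left_inj_of_invertible A).mp hT)

end Matrix

theorem unique_orthogonal_rotation_posSemidef
    (n k : ℕ)
    (Ghat : Matrix (Fin n) (Fin k) ℝ)
    (D : Matrix (Fin n) (Fin k) ℝ) (hrank : (Dᵀ * Ghat).rank = k) :
    ∃! Q : Matrix (Fin k) (Fin k) ℝ, Qᵀ * Q = 1 ∧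
      (Ghat * Q)ᵀ * D = Dᵀ * (Ghat * Q) ∧ ((Ghat * Q)ᵀ * D).PosSemidef := by
  have hA : IsUnit (Ghatᵀ * D).det := by
    rw [← det_transpose, transpose_mul, transpose_transpose]
    exact isUnit_det_of_rank_eq_card (by simpa using hrank)
  refine (existsUnique_congr fun Q => ?_).mp (existsUnique_orthogonal_transpose_mul_posSemidef hA)
  have hGQ : (Ghat * Q)ᵀ * D = Qᵀ * (Ghatᵀ * D) := by rw [transpose_mul, Matrix.mul_assoc]
  have hDGQ : Dᵀ * (Ghat * Q) = ((Ghat * Q)ᵀ * D)ᵀ := by rw [transpose_mul, transpose_transpose]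
  rw [hDGQ, hGQ]
  exact and_congr_right fun _ => ⟨fun h => ⟨h.transpose_eq.symm, h⟩, And.right⟩
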